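/- arXiv:2305.00966 — 3 statements merged into one kernel-verified Lean document; each statement's English description precedes it below -/
import Mathlib

section
/- Let α ∈ (0,1] and C₁ > 0. Let D be a probability distribution on ℝ^d with finite fourth moments, mean μ, and covariance matrix Σ, and suppose that for every symmetric d×d matrix B: Var_{X∼D}[XᵀBX] ≤ C₁·(‖Σ^{1/2} B Σ^{1/2}‖_F² + ‖Σ^{1/2} B μ‖₂²). Let H be a d×d positive semidefinite matrix such that ‖H^{†/2} Σ H^{†/2}‖_op ≤ 3/α and ‖H^{†/2} μ‖₂² ≤ 3/α. Then for every symmetric d×d matrix A with ‖A‖_F = 1: Var_{X∼D}[(H^{†/2} X)ᵀ A (H^{†/2} X)] ≤ 18·C₁/α². -/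
open Matrix MeasureTheory ProbabilityTheory

noncomputable section

/-- The positive semidefinite square root of a positive semidefinite matrix
(the definition `Matrix.PosSemidef.sqrt` of the older Mathlib, since removed). -/
def Matrix.PosSemidef.sqrt {n 𝕜 : Type*} [Fintype n] [DecidableEq n] [RCLike 𝕜]
    [PartialOrder 𝕜] [StarOrderedRing 𝕜]
    {A : Matrix n n 𝕜} (hA : A.PosSemidef) : Matrix n n 𝕜 :=
  hA.1.eigenvectorUnitary.1 * Matrix.diagonal ((↑) ∘ (Real.sqrt ·) ∘ hA.1.eigenvalues) *
    (star hA.1.eigenvectorUnitary : Matrix n n 𝕜)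

namespace ListDecCov

/-- Frobenius norm of a square real matrix. -/
def frobNorm {d : ℕ} (M : Matrix (Fin d) (Fin d) ℝ) : ℝ :=
  Real.sqrt (∑ i, ∑ j, (M i j) ^ 2)

/-- Operator (spectral) norm of a square real matrix. -/
def opNorm {d : ℕ} (M : Matrix (Fin d) (Fin d) ℝ) : ℝ :=
  ‖Matrix.toEuclideanCLM (𝕜 := ℝ) M‖

/-- Euclidean (ℓ²) norm of a vector. -/
def vecNorm {d : ℕ} (v : Fin d → ℝ) : ℝ :=
  Real.sqrt (∑ i, (v i) ^ 2)

/-- The four Penrose equations characterizing the Moore–Penrose pseudoinverse. -/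
def IsMoorePenrose {d : ℕ} (H Hd : Matrix (Fin d) (Fin d) ℝ) : Prop :=
  H * Hd * H = H ∧ Hd * H * Hd = Hd ∧ (H * Hd)ᵀ = H * Hd ∧ (Hd * H)ᵀ = Hd * H

/-- Average of `f` over a finite set. -/
def fAvg {X V : Type*} [AddCommMonoid V] [Module ℝ V] (A : Finset X) (f : X → V) : V :=
  (A.card : ℝ)⁻¹ • ∑ x ∈ A, f x

/-- Average of `f` over a multiset. -/
def msAvg {X V : Type*} [AddCommMonoid V] [Module ℝ V] (T : Multiset X) (f : X → V) : V :=
  (T.card : ℝ)⁻¹ • (T.map f).sum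

/-- Empirical covariance matrix of `f x`, `x` ranging over a finite set. -/
def fCov {X : Type*} {d : ℕ} (A : Finset X) (f : X → (Fin d → ℝ)) :
    Matrix (Fin d) (Fin d) ℝ :=
  fAvg A (fun x => Matrix.vecMulVec (f x) (f x)) - Matrix.vecMulVec (fAvg A f) (fAvg A f)

/-- Empirical covariance matrix of `f x`, `x` ranging over a multiset. -/
def msCov {X : Type*} {d : ℕ} (T : Multiset X) (f : X → (Fin d → ℝ)) :
    Matrix (Fin d) (Fin d) ℝ :=
  msAvg T (fun x => Matrix.vecMulVec (f x) (f x)) - Matrix.vecMulVec (msAvg T f) (msAvg T f)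

/-- Empirical variance of `g x`, `x` ranging over a finite set. -/
def fVar {X : Type*} (A : Finset X) (g : X → ℝ) : ℝ :=
  fAvg A fun x => (g x - fAvg A g) ^ 2

/-- Empirical variance of `g x`, `x` ranging over a multiset. -/
def msVar {X : Type*} (T : Multiset X) (g : X → ℝ) : ℝ :=
  msAvg T fun x => (g x - msAvg T g) ^ 2

/-- The `k`-th smallest element (1-indexed) of a multiset of reals. -/
def kthSmallest (s : Multiset ℝ) (k : ℕ) : ℝ :=
  (s.sort (· ≤ ·)).getD (k - 1) 0

/-- Median (the `⌈m/2⌉`-th smallest element) of a multiset of reals of size `m`. -/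
def msMedian (s : Multiset ℝ) : ℝ :=
  kthSmallest s ((Multiset.card s + 1) / 2)

/-- Conditions (L.1)–(L.2) of stability, with respect to mean `μ`, covariance `Sig`
(with psd square root `sqrtSig`) and parameter `ε`. -/
def SatisfiesL12 {d : ℕ} (μ : Fin d → ℝ) (Sig sqrtSig : Matrix (Fin d) (Fin d) ℝ) (ε : ℝ)
    (A : Finset (Fin d → ℝ)) : Prop :=
  ∀ A' ⊆ A, (1 - ε) * (A.card : ℝ) ≤ (A'.card : ℝ) →
    (∀ v : Fin d → ℝ,
        |fAvg A' (fun x => v ⬝ᵥ (x - μ))| ≤ 0.1 * Real.sqrt (v ⬝ᵥ Sig.mulVec v)) ∧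
    (∀ U : Matrix (Fin d) (Fin d) ℝ, U.IsSymm →
        |Matrix.trace ((fAvg A' (fun x => Matrix.vecMulVec (x - μ) (x - μ)) - Sig) * U)|
          ≤ 0.1 * frobNorm (sqrtSig * U * sqrtSig))

end ListDecCov

/-! With `S = Σ^{1/2}`, the form `(W x)ᵀ A (W x)` is `xᵀ (W A W) x`, so the hypothesis bounds its
variance by `C₁ (‖S W A W S‖_F² + ‖S W A W μ‖²)`. Both terms factor through `S W`, whose squared
operator norm is `‖W Σ W‖_op ≤ 3/α`; with `‖A‖_F = 1` and `‖W μ‖² ≤ 3/α`, each is at most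
`(3/α)²`. -/

namespace Matrix.PosSemidef

open scoped ComplexOrder

variable {n 𝕜 : Type*} [Fintype n] [DecidableEq n] [RCLike 𝕜] {A : Matrix n n 𝕜}

theorem sqrt_isHermitian (hA : A.PosSemidef) : hA.sqrt.IsHermitian := by
  simp [IsHermitian, Matrix.PosSemidef.sqrt, star_eq_conjTranspose, conjTranspose_mul,
    diagonal_conjTranspose, Matrix.mul_assoc, Pi.star_def, Function.comp_def]

theorem sqrt_mul_self (hA : A.PosSemidef) : hA.sqrt * hA.sqrt = A := by
  set U : Matrix n n 𝕜 := (hA.1.eigenvectorUnitary : Matrix n n 𝕜)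
  set D : Matrix n n 𝕜 := diagonal ((↑) ∘ (Real.sqrt ·) ∘ hA.1.eigenvalues)
  have hU : star U * U = 1 := Unitary.coe_star_mul_self _
  have hD : D * D = diagonal ((↑) ∘ hA.1.eigenvalues) := by
    rw [diagonal_mul_diagonal]
    congr 1
    funext k
    simp only [Function.comp_apply, ← RCLike.ofReal_mul,
      Real.mul_self_sqrt (hA.eigenvalues_nonneg k)]
  conv_rhs => rw [hA.1.spectral_theorem, Unitary.conjStarAlgAut_apply]
  calc hA.sqrt * hA.sqrt = U * D * (star U * U) * D * star U := by
        simp only [Matrix.PosSemidef.sqrt, U, D, Matrix.mul_assoc]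
    _ = _ := by rw [hU, Matrix.mul_one, Matrix.mul_assoc U D D, hD]

theorem sqrt_transpose {A : Matrix n n ℝ} (hA : A.PosSemidef) : hA.sqrtᵀ = hA.sqrt :=
  hA.sqrt_isHermitian

end Matrix.PosSemidef

namespace ListDecCov

variable {d : ℕ}

theorem vecNorm_nonneg (v : Fin d → ℝ) : 0 ≤ vecNorm v := Real.sqrt_nonneg _

theorem frobNorm_nonneg (M : Matrix (Fin d) (Fin d) ℝ) : 0 ≤ frobNorm M := Real.sqrt_nonneg _

theorem opNorm_nonneg (M : Matrix (Fin d) (Fin d) ℝ) : 0 ≤ opNorm M := norm_nonneg _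

theorem vecNorm_sq (v : Fin d → ℝ) : vecNorm v ^ 2 = ∑ i, v i ^ 2 :=
  Real.sq_sqrt (by positivity)

theorem frobNorm_sq_eq_sum_vecNorm_sq (M : Matrix (Fin d) (Fin d) ℝ) :
    frobNorm M ^ 2 = ∑ j, vecNorm (Mᵀ j) ^ 2 := by
  rw [frobNorm, Real.sq_sqrt (by positivity), Finset.sum_comm]
  simp only [vecNorm_sq, transpose_apply]

theorem frobNorm_transpose (M : Matrix (Fin d) (Fin d) ℝ) : frobNorm Mᵀ = frobNorm M := by
  rw [frobNorm, frobNorm, Finset.sum_comm]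
  rfl

theorem vecNorm_mulVec_le (M : Matrix (Fin d) (Fin d) ℝ) (v : Fin d → ℝ) :
    vecNorm (M *ᵥ v) ≤ opNorm M * vecNorm v := by
  have hnorm : ∀ w : Fin d → ℝ, vecNorm w = ‖WithLp.toLp 2 w‖ := fun w => by
    simp [vecNorm, EuclideanSpace.norm_eq]
  rw [hnorm, hnorm]
  exact (toEuclideanCLM (𝕜 := ℝ) M).le_opNorm (WithLp.toLp 2 v)

theorem vecNorm_mulVec_le_frobNorm_mul (M : Matrix (Fin d) (Fin d) ℝ) (v : Fin d → ℝ) :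
    vecNorm (M *ᵥ v) ≤ frobNorm M * vecNorm v := by
  refine le_of_pow_le_pow_left₀ two_ne_zero
    (mul_nonneg (frobNorm_nonneg M) (vecNorm_nonneg v)) ?_
  rw [vecNorm_sq, mul_pow, frobNorm, Real.sq_sqrt (by positivity), vecNorm_sq, Finset.sum_mul]
  gcongr with i
  exact Finset.sum_mul_sq_le_sq_mul_sq Finset.univ (M i) v

theorem opNorm_transpose_mul_self (M : Matrix (Fin d) (Fin d) ℝ) :
    opNorm (Mᵀ * M) = opNorm M ^ 2 := by
  rw [opNorm, opNorm, show Mᵀ = star M from rfl, map_mul, map_star,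
    ContinuousLinearMap.star_eq_adjoint, sq]
  exact ContinuousLinearMap.norm_adjoint_comp_self _

theorem frobNorm_mul_le (M N : Matrix (Fin d) (Fin d) ℝ) :
    frobNorm (M * N) ≤ opNorm M * frobNorm N := by
  refine le_of_pow_le_pow_left₀ two_ne_zero
    (mul_nonneg (opNorm_nonneg M) (frobNorm_nonneg N)) ?_
  have hcol : ∀ j, (M * N)ᵀ j = M *ᵥ Nᵀ j := fun j => by
    ext i
    simp [mulVec, mul_apply, dotProduct]
  rw [frobNorm_sq_eq_sum_vecNorm_sq, mul_pow, frobNorm_sq_eq_sum_vecNorm_sq, Finset.mul_sum]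
  gcongr with j
  rw [hcol, ← mul_pow]
  exact pow_le_pow_left₀ (vecNorm_nonneg _) (vecNorm_mulVec_le _ _) 2

theorem frobNorm_mul_mul_transpose_le (M A : Matrix (Fin d) (Fin d) ℝ) :
    frobNorm (M * A * Mᵀ) ≤ opNorm M ^ 2 * frobNorm A := by
  have hright : frobNorm (A * Mᵀ) ≤ opNorm M * frobNorm A := by
    rw [← frobNorm_transpose, transpose_mul, transpose_transpose, ← frobNorm_transpose A]
    exact frobNorm_mul_le M Aᵀ
  calc frobNorm (M * A * Mᵀ) ≤ opNorm M * frobNorm (A * Mᵀ) := by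
        rw [Matrix.mul_assoc]
        exact frobNorm_mul_le M _
    _ ≤ opNorm M * (opNorm M * frobNorm A) := by gcongr; exact opNorm_nonneg M
    _ = opNorm M ^ 2 * frobNorm A := by ring

theorem vecNorm_mul_mulVec_le (M A : Matrix (Fin d) (Fin d) ℝ) (v : Fin d → ℝ) :
    vecNorm ((M * A) *ᵥ v) ≤ opNorm M * frobNorm A * vecNorm v := by
  calc vecNorm ((M * A) *ᵥ v) ≤ opNorm M * vecNorm (A *ᵥ v) := by
        rw [← mulVec_mulVec]
        exact vecNorm_mulVec_le M _
    _ ≤ opNorm M * (frobNorm A * vecNorm v) := by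
        gcongr
        · exact opNorm_nonneg M
        · exact vecNorm_mulVec_le_frobNorm_mul A v
    _ = opNorm M * frobNorm A * vecNorm v := by ring

theorem dotProduct_mulVec_mulVec (W A : Matrix (Fin d) (Fin d) ℝ) (x y : Fin d → ℝ) :
    (W *ᵥ x) ⬝ᵥ A *ᵥ (W *ᵥ y) = x ⬝ᵥ (Wᵀ * A * W) *ᵥ y := by
  rw [← mulVec_mulVec, ← mulVec_mulVec, dotProduct_mulVec x, vecMul_transpose]

theorem opNorm_sqrt_mul_sq {Sig W : Matrix (Fin d) (Fin d) ℝ} (hSig : Sig.PosSemidef)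
    (hW : Wᵀ = W) : opNorm (hSig.sqrt * W) ^ 2 = opNorm (W * Sig * W) := by
  rw [← opNorm_transpose_mul_self, transpose_mul, hW, hSig.sqrt_transpose, Matrix.mul_assoc,
    ← Matrix.mul_assoc hSig.sqrt, hSig.sqrt_mul_self, Matrix.mul_assoc]

theorem statement7_general (d : ℕ) (α C₁ : ℝ) (hC₁ : 0 < C₁)
    (D : MeasureTheory.Measure (Fin d → ℝ))
    (μ : Fin d → ℝ) (Sig : Matrix (Fin d) (Fin d) ℝ) (hSig : Sig.PosSemidef)
    (hvar : ∀ B : Matrix (Fin d) (Fin d) ℝ, B.IsSymm →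
      ProbabilityTheory.variance (fun x => x ⬝ᵥ B.mulVec x) D ≤
        C₁ * (frobNorm (hSig.sqrt * B * hSig.sqrt) ^ 2 +
          vecNorm ((hSig.sqrt * B).mulVec μ) ^ 2))
    (W : Matrix (Fin d) (Fin d) ℝ) (hW : W.PosSemidef)
    (hop : opNorm (W * Sig * W) ≤ 3 / α)
    (hmu : vecNorm (W.mulVec μ) ^ 2 ≤ 3 / α)
    (A : Matrix (Fin d) (Fin d) ℝ) (hA : A.IsSymm) (hAF : frobNorm A = 1) :
    ProbabilityTheory.variance (fun x => (W.mulVec x) ⬝ᵥ A.mulVec (W.mulVec x)) D ≤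
      18 * C₁ / α ^ 2 := by
  set S := hSig.sqrt
  have hWt : Wᵀ = W := hW.1
  have hSW : opNorm (S * W) ^ 2 ≤ 3 / α := (opNorm_sqrt_mul_sq hSig hWt).trans_le hop
  have hfrob : frobNorm (S * (W * A * W) * S) ≤ 3 / α := by
    have h := frobNorm_mul_mul_transpose_le (S * W) A
    rw [transpose_mul, hWt, hSig.sqrt_transpose, hAF, mul_one] at h
    simpa only [Matrix.mul_assoc] using h.trans hSW
  have hvec : vecNorm ((S * (W * A * W)) *ᵥ μ) ^ 2 ≤ 3 / α * (3 / α) := by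
    have h := vecNorm_mul_mulVec_le (S * W) A (W *ᵥ μ)
    rw [mulVec_mulVec, hAF, mul_one] at h
    calc vecNorm ((S * (W * A * W)) *ᵥ μ) ^ 2 ≤ opNorm (S * W) ^ 2 * vecNorm (W *ᵥ μ) ^ 2 := by
          rw [← mul_pow]
          simpa only [Matrix.mul_assoc] using pow_le_pow_left₀ (vecNorm_nonneg _) h 2
      _ ≤ 3 / α * (3 / α) := by
          gcongr
          exact (sq_nonneg _).trans hmu
  have hsymm : (W * A * W).IsSymm := by
    rw [IsSymm, transpose_mul, transpose_mul, hWt, hA.eq, Matrix.mul_assoc]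
  calc variance (fun x => (W *ᵥ x) ⬝ᵥ A *ᵥ (W *ᵥ x)) D
      = variance (fun x => x ⬝ᵥ (W * A * W) *ᵥ x) D := by
        simp only [dotProduct_mulVec_mulVec, hWt]
    _ ≤ C₁ * (frobNorm (S * (W * A * W) * S) ^ 2 + vecNorm ((S * (W * A * W)) *ᵥ μ) ^ 2) :=
        hvar _ hsymm
    _ ≤ C₁ * (3 / α * (3 / α) + 3 / α * (3 / α)) := by
        gcongr
        rw [← sq]
        exact pow_le_pow_left₀ (frobNorm_nonneg _) hfrob 2
    _ = 18 * C₁ / α ^ 2 := by ring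

/-- if a distribution `D` (with mean `μ`, covariance `Σ`, finite fourth
moments) has bounded variance of quadratic forms, and `H` is PSD with
`‖H^{†/2} Σ H^{†/2}‖_op ≤ 3/α` and `‖H^{†/2} μ‖₂² ≤ 3/α`, then for every symmetric `A`
with `‖A‖_F = 1` the variance of `(H^{†/2} X)ᵀ A (H^{†/2} X)` is at most `18 C₁/α²`.
Here `W` plays the role of `H^{†/2}`. -/
theorem statement7 (d : ℕ) (α C₁ : ℝ) (hα : α ∈ Set.Ioc (0 : ℝ) 1) (hC₁ : 0 < C₁)
    (D : MeasureTheory.Measure (Fin d → ℝ)) [MeasureTheory.IsProbabilityMeasure D]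
    (hmom : ∀ i, MeasureTheory.MemLp (fun x => x i) 4 D)
    (μ : Fin d → ℝ) (Sig : Matrix (Fin d) (Fin d) ℝ) (hSig : Sig.PosSemidef)
    (hmean : ∀ i, ∫ x, x i ∂D = μ i)
    (hcov : ∀ i j, ∫ x, (x i - μ i) * (x j - μ j) ∂D = Sig i j)
    (hvar : ∀ B : Matrix (Fin d) (Fin d) ℝ, B.IsSymm →
      ProbabilityTheory.variance (fun x => x ⬝ᵥ B.mulVec x) D ≤
        C₁ * (frobNorm (hSig.sqrt * B * hSig.sqrt) ^ 2 +
          vecNorm ((hSig.sqrt * B).mulVec μ) ^ 2))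
    (H W : Matrix (Fin d) (Fin d) ℝ) (hH : H.PosSemidef) (hW : W.PosSemidef)
    (hMP : IsMoorePenrose H (W * W))
    (hop : opNorm (W * Sig * W) ≤ 3 / α)
    (hmu : vecNorm (W.mulVec μ) ^ 2 ≤ 3 / α)
    (A : Matrix (Fin d) (Fin d) ℝ) (hA : A.IsSymm) (hAF : frobNorm A = 1) :
    ProbabilityTheory.variance (fun x => (W.mulVec x) ⬝ᵥ A.mulVec (W.mulVec x)) D ≤
      18 * C₁ / α ^ 2 :=
  statement7_general d α C₁ hC₁ D μ Sig hSig hvar W hW hop hmu A hA hAF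

end ListDecCov
end
end

section
/- Let α ∈ (0,1], let T be a finite nonempty multiset of points in ℝ^d, and let P be a symmetric d×d matrix. Define V* = sup over all symmetric d×d matrices A with ‖A‖_F ≤ 1 of Var_{x∼T}[xᵀ P A P x]. Then for every sub-multiset T' ⊆ T with |T'| ≥ (α/2)·|T|: ‖Cov_{x∼T'}[P x] − E_{x∼T}[P x xᵀ P]‖_F² ≤ (4/α)·V* + (8/α²)·‖E_{x∼T}[P x xᵀ P]‖_op². -/
open Matrix MeasureTheory ProbabilityTheory

noncomputable section

/-!
Put `D = Cov_{T'}[Px] - E_T[P x xᵀ P]` and test it against `A = D / ‖D‖_F`, which is symmetric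
with `‖A‖_F ≤ 1`: for `g x = (Px)ᵀ A (Px)` and `μ = E_{T'}[Px]`,
`‖D‖_F = (E_{T'} g - E_T g) - μᵀ A μ`. As `T'` is at least an `α/2` fraction of `T`, averages of
nonnegative functions over `T'` are at most `2/α` times those over `T`. Together with Jensen on
`T'` this gives `(E_{T'} g - E_T g)² ≤ (2/α) Var_T g ≤ (2/α) V*`, and
`|μ|⁴ = (E_{T'} μ·Px)² ≤ (2/α) μᵀ E_T[P x xᵀ P] μ ≤ (2/α) ‖E_T[P x xᵀ P]‖_op |μ|²`, so that
`|μᵀ A μ| ≤ |μ|² ≤ (2/α) ‖E_T[P x xᵀ P]‖_op`. Conclude with `(a - b)² ≤ 2a² + 2b²`.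
-/

open scoped InnerProductSpace

namespace ListDecCov

section Averages

variable {X V W : Type*} [AddCommMonoid V] [Module ℝ V] [AddCommMonoid W] [Module ℝ W]

theorem map_msAvg (L : V →ₗ[ℝ] W) (T : Multiset X) (f : X → V) :
    L (msAvg T f) = msAvg T (fun x => L (f x)) := by
  simp [msAvg, map_multiset_sum, Multiset.map_map]

theorem card_mul_msAvg (T : Multiset X) (f : X → ℝ) :
    (Multiset.card T : ℝ) * msAvg T f = (T.map f).sum := by
  rcases eq_or_ne T 0 with rfl | hT
  · simp [msAvg]
  · have : (Multiset.card T : ℝ) ≠ 0 := by simpa using hT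
    simp [msAvg, this]

theorem msAvg_sub (T : Multiset X) (f g : X → ℝ) :
    msAvg T (fun x => f x - g x) = msAvg T f - msAvg T g := by
  simp [msAvg, Multiset.sum_map_sub, mul_sub]

theorem msAvg_add (T : Multiset X) (f g : X → ℝ) :
    msAvg T (fun x => f x + g x) = msAvg T f + msAvg T g := by
  simp [msAvg, Multiset.sum_map_add, mul_add]

theorem msAvg_const_mul (T : Multiset X) (c : ℝ) (f : X → ℝ) :
    msAvg T (fun x => c * f x) = c * msAvg T f := by
  simp [msAvg, Multiset.sum_map_mul_left, mul_left_comm]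

theorem msAvg_const {T : Multiset X} (hT : T ≠ 0) (c : ℝ) : msAvg T (fun _ => c) = c := by
  have : (Multiset.card T : ℝ) ≠ 0 := by simpa using hT
  simp [msAvg, this]

theorem msAvg_nonneg {T : Multiset X} {f : X → ℝ} (hf : ∀ x ∈ T, 0 ≤ f x) :
    0 ≤ msAvg T f :=
  smul_nonneg (by positivity) (Multiset.sum_nonneg fun _ h => by
    obtain ⟨x, hx, rfl⟩ := Multiset.mem_map.mp h; exact hf x hx)

theorem msAvg_mono {T : Multiset X} {f g : X → ℝ} (h : ∀ x ∈ T, f x ≤ g x) :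
    msAvg T f ≤ msAvg T g :=
  smul_le_smul_of_nonneg_left (Multiset.sum_map_le_sum_map f g h) (by positivity)

theorem msVar_eq_msAvg_sq_sub_sq (T : Multiset X) (g : X → ℝ) :
    msVar T g = msAvg T (fun x => g x ^ 2) - msAvg T g ^ 2 := by
  rcases eq_or_ne T 0 with rfl | hT
  · simp [msVar, msAvg]
  have hexp : (fun x => (g x - msAvg T g) ^ 2) =
      fun x => (g x ^ 2 - 2 * msAvg T g * g x) + msAvg T g ^ 2 := by
    funext x; ring
  rw [msVar, hexp, msAvg_add, msAvg_sub, msAvg_const_mul, msAvg_const hT]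
  ring

theorem msVar_nonneg (T : Multiset X) (g : X → ℝ) : 0 ≤ msVar T g :=
  msAvg_nonneg fun _ _ => sq_nonneg _

theorem sq_msAvg_le_msAvg_sq (T : Multiset X) (g : X → ℝ) :
    msAvg T g ^ 2 ≤ msAvg T (fun x => g x ^ 2) := by
  linarith [msVar_nonneg T g, msVar_eq_msAvg_sq_sub_sq T g]

theorem card_mul_msAvg_le_of_le {T T' : Multiset X} (hsub : T' ≤ T) {f : X → ℝ}
    (hf : ∀ x ∈ T, 0 ≤ f x) :
    (Multiset.card T' : ℝ) * msAvg T' f ≤ Multiset.card T * msAvg T f := by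
  obtain ⟨U, rfl⟩ := Multiset.le_iff_exists_add.mp hsub
  rw [card_mul_msAvg, card_mul_msAvg, Multiset.map_add, Multiset.sum_add, le_add_iff_nonneg_right]
  exact Multiset.sum_nonneg fun _ h => by
    obtain ⟨x, hx, rfl⟩ := Multiset.mem_map.mp h
    exact hf x (Multiset.mem_add.mpr (Or.inr hx))

theorem card_mul_sq_msAvg_sub_le_msVar {T T' : Multiset X} (hsub : T' ≤ T) (g : X → ℝ) :
    (Multiset.card T' : ℝ) * (msAvg T' g - msAvg T g) ^ 2 ≤
      Multiset.card T * msVar T g := by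
  rcases eq_or_ne T' 0 with rfl | hT'
  · simpa using mul_nonneg (Nat.cast_nonneg _) (msVar_nonneg T g)
  have hshift : msAvg T' g - msAvg T g = msAvg T' (fun x => g x - msAvg T g) := by
    rw [msAvg_sub, msAvg_const hT']
  calc (Multiset.card T' : ℝ) * (msAvg T' g - msAvg T g) ^ 2
      ≤ Multiset.card T' * msAvg T' (fun x => (g x - msAvg T g) ^ 2) := by
        rw [hshift]
        exact mul_le_mul_of_nonneg_left (sq_msAvg_le_msAvg_sq _ _) (Nat.cast_nonneg _)
    _ ≤ Multiset.card T * msVar T g :=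
        card_mul_msAvg_le_of_le hsub fun _ _ => sq_nonneg _

end Averages

section Frobenius

variable {m n : Type*}

/-- A matrix as a vector of the Euclidean space on its entries, where the norm is the
Frobenius norm and the inner product is the Frobenius inner product `tr (Mᵀ N)`. -/
def toFrobenius : Matrix m n ℝ ≃ₗ[ℝ] EuclideanSpace ℝ (m × n) :=
  (LinearEquiv.curry ℝ ℝ m n).symm.trans (WithLp.linearEquiv 2 ℝ (m × n → ℝ)).symm

@[simp]
theorem toFrobenius_apply (M : Matrix m n ℝ) (p : m × n) :
    toFrobenius M p = M p.1 p.2 :=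
  rfl

theorem inner_toFrobenius [Fintype m] [Fintype n] (M N : Matrix m n ℝ) :
    ⟪toFrobenius M, toFrobenius N⟫_ℝ = ∑ i, ∑ j, M i j * N i j := by
  simp [PiLp.inner_apply, Fintype.sum_prod_type, mul_comm]

theorem frobNorm_eq_norm_toFrobenius {d : ℕ} (M : Matrix (Fin d) (Fin d) ℝ) :
    frobNorm M = ‖toFrobenius M‖ := by
  rw [norm_eq_sqrt_real_inner, inner_toFrobenius, frobNorm]
  simp only [sq]

theorem inner_toFrobenius_msAvg {X : Type*} [Fintype m] [Fintype n] (T : Multiset X)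
    (F : X → Matrix m n ℝ) (A : Matrix m n ℝ) :
    ⟪toFrobenius (msAvg T F), toFrobenius A⟫_ℝ =
      msAvg T fun x => ⟪toFrobenius (F x), toFrobenius A⟫_ℝ := by
  simp_rw [real_inner_comm (toFrobenius A)]
  exact map_msAvg ((innerₗ _ (toFrobenius A)).comp toFrobenius.toLinearMap) T F

theorem inner_toFrobenius_vecMulVec [Fintype n] (u : n → ℝ) (A : Matrix n n ℝ) :
    ⟪toFrobenius (vecMulVec u u), toFrobenius A⟫_ℝ = u ⬝ᵥ A *ᵥ u := by
  simp only [inner_toFrobenius, vecMulVec_apply, dotProduct, mulVec, Finset.mul_sum]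
  exact Finset.sum_congr rfl fun i _ => Finset.sum_congr rfl fun j _ => by ring

theorem norm_toFrobenius_vecMulVec [Fintype n] (u : n → ℝ) :
    ‖toFrobenius (vecMulVec u u)‖ = u ⬝ᵥ u := by
  rw [norm_eq_sqrt_real_inner, inner_toFrobenius_vecMulVec, vecMulVec_mulVec]
  simp only [op_smul_eq_smul, dotProduct_smul, smul_eq_mul, ← sq]
  exact Real.sqrt_sq (dotProduct_self_star_nonneg u)

theorem abs_dotProduct_mulVec_le [Fintype n] (u : n → ℝ) (A : Matrix n n ℝ) :
    |u ⬝ᵥ A *ᵥ u| ≤ (u ⬝ᵥ u) * ‖toFrobenius A‖ := by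
  rw [← inner_toFrobenius_vecMulVec, ← norm_toFrobenius_vecMulVec]
  exact abs_real_inner_le_norm _ _

theorem exists_isSymm_inner_toFrobenius_eq_norm [Fintype n] {D : Matrix n n ℝ}
    (hD : D.IsSymm) :
    ∃ A : Matrix n n ℝ, A.IsSymm ∧ ‖toFrobenius A‖ ≤ 1 ∧
      ⟪toFrobenius D, toFrobenius A⟫_ℝ = ‖toFrobenius D‖ := by
  refine ⟨‖toFrobenius D‖⁻¹ • D, hD.smul _, ?_, ?_⟩
  · rw [map_smul, norm_smul, norm_inv, norm_norm]
    exact inv_mul_le_one_of_le₀ le_rfl (norm_nonneg _)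
  · rw [map_smul, inner_smul_right, real_inner_self_eq_norm_sq]
    rcases eq_or_ne ‖toFrobenius D‖ 0 with h | h
    · simp [h]
    · field_simp

end Frobenius

theorem dotProduct_mulVec_le_opNorm {d : ℕ} (M : Matrix (Fin d) (Fin d) ℝ) (u : Fin d → ℝ) :
    u ⬝ᵥ M *ᵥ u ≤ opNorm M * (u ⬝ᵥ u) := by
  have hu : ‖WithLp.toLp 2 u‖ ^ 2 = u ⬝ᵥ u := by
    rw [← real_inner_self_eq_norm_sq, EuclideanSpace.inner_toLp_toLp]
    simp
  calc u ⬝ᵥ M *ᵥ u = ⟪toEuclideanCLM (𝕜 := ℝ) M (WithLp.toLp 2 u), WithLp.toLp 2 u⟫_ℝ := by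
        simp [toEuclideanCLM_toLp, EuclideanSpace.inner_toLp_toLp]
    _ ≤ opNorm M * ‖WithLp.toLp 2 u‖ * ‖WithLp.toLp 2 u‖ :=
        (real_inner_le_norm _ _).trans
          (mul_le_mul_of_nonneg_right (ContinuousLinearMap.le_opNorm _ _) (norm_nonneg _))
    _ = opNorm M * (u ⬝ᵥ u) := by rw [mul_assoc, ← sq, hu]

section Covariance

variable {X n : Type*} {d : ℕ}

theorem isSymm_vecMulVec_self (u : n → ℝ) : (vecMulVec u u).IsSymm :=
  transpose_vecMulVec u u

theorem isSymm_msAvg_vecMulVec_self (T : Multiset X) (f : X → n → ℝ) :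
    (msAvg T fun x => vecMulVec (f x) (f x)).IsSymm := by
  calc (msAvg T fun x => vecMulVec (f x) (f x))ᵀ
      = msAvg T fun x => (vecMulVec (f x) (f x))ᵀ :=
        map_msAvg (transposeLinearEquiv n n ℝ ℝ).toLinearMap T _
    _ = msAvg T fun x => vecMulVec (f x) (f x) := by simp_rw [transpose_vecMulVec]

theorem isSymm_msCov (T : Multiset X) (f : X → Fin d → ℝ) : (msCov T f).IsSymm :=
  (isSymm_msAvg_vecMulVec_self T f).sub (isSymm_vecMulVec_self _)

theorem inner_toFrobenius_msCov_sub_msAvg (T T' : Multiset X) (f : X → Fin d → ℝ)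
    (A : Matrix (Fin d) (Fin d) ℝ) :
    ⟪toFrobenius (msCov T' f - msAvg T fun x => vecMulVec (f x) (f x)), toFrobenius A⟫_ℝ =
      (msAvg T' (fun x => f x ⬝ᵥ A *ᵥ f x) - msAvg T (fun x => f x ⬝ᵥ A *ᵥ f x)) -
        msAvg T' f ⬝ᵥ A *ᵥ msAvg T' f := by
  simp only [msCov, map_sub, inner_sub_left, inner_toFrobenius_msAvg,
    inner_toFrobenius_vecMulVec]
  ring

theorem card_mul_dotProduct_msAvg_self_le {T T' : Multiset X} (hsub : T' ≤ T)
    (f : X → Fin d → ℝ) :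
    (Multiset.card T' : ℝ) * (msAvg T' f ⬝ᵥ msAvg T' f) ≤
      Multiset.card T * opNorm (msAvg T fun x => vecMulVec (f x) (f x)) := by
  set μ := msAvg T' f
  set M := msAvg T fun x => vecMulVec (f x) (f x)
  have hμ : μ ⬝ᵥ μ = msAvg T' fun x => μ ⬝ᵥ f x := map_msAvg (dotProductBilin ℝ ℝ μ) T' f
  have hM : μ ⬝ᵥ M *ᵥ μ = msAvg T fun x => (μ ⬝ᵥ f x) ^ 2 := by
    rw [← inner_toFrobenius_vecMulVec, real_inner_comm, inner_toFrobenius_msAvg]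
    simp_rw [inner_toFrobenius_vecMulVec, vecMulVec_mulVec]
    simp [op_smul_eq_smul, dotProduct_comm μ, sq]
  have key : (Multiset.card T' : ℝ) * (μ ⬝ᵥ μ) * (μ ⬝ᵥ μ) ≤
      Multiset.card T * opNorm M * (μ ⬝ᵥ μ) :=
    calc (Multiset.card T' : ℝ) * (μ ⬝ᵥ μ) * (μ ⬝ᵥ μ)
        = Multiset.card T' * (msAvg T' fun x => μ ⬝ᵥ f x) ^ 2 := by rw [← hμ]; ring
      _ ≤ Multiset.card T' * msAvg T' fun x => (μ ⬝ᵥ f x) ^ 2 :=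
          mul_le_mul_of_nonneg_left (sq_msAvg_le_msAvg_sq _ _) (Nat.cast_nonneg _)
      _ ≤ Multiset.card T * msAvg T fun x => (μ ⬝ᵥ f x) ^ 2 :=
          card_mul_msAvg_le_of_le hsub fun _ _ => sq_nonneg _
      _ ≤ Multiset.card T * opNorm M * (μ ⬝ᵥ μ) := by
          rw [← hM, mul_assoc]
          exact mul_le_mul_of_nonneg_left (dotProduct_mulVec_le_opNorm M μ) (Nat.cast_nonneg _)
  have hμ0 : 0 ≤ μ ⬝ᵥ μ := dotProduct_self_star_nonneg μ
  rcases hμ0.eq_or_lt with h | h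
  · rw [← h, mul_zero]
    exact mul_nonneg (Nat.cast_nonneg _) (norm_nonneg _)
  · exact le_of_mul_le_mul_right key h

end Covariance

theorem dotProduct_mul_mul_mulVec {d : ℕ} {P : Matrix (Fin d) (Fin d) ℝ} (hP : P.IsSymm)
    (A : Matrix (Fin d) (Fin d) ℝ) (x : Fin d → ℝ) :
    x ⬝ᵥ (P * A * P) *ᵥ x = P *ᵥ x ⬝ᵥ A *ᵥ (P *ᵥ x) := by
  rw [← mulVec_mulVec, ← mulVec_mulVec, dotProduct_mulVec, ← mulVec_transpose, hP.eq]

theorem msVar_le_sSup_msVar_quadForm {d : ℕ} (T : Multiset (Fin d → ℝ))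
    {P : Matrix (Fin d) (Fin d) ℝ} (hP : P.IsSymm) {A : Matrix (Fin d) (Fin d) ℝ}
    (hA : A.IsSymm) (hAF : frobNorm A ≤ 1) :
    msVar T (fun x => P *ᵥ x ⬝ᵥ A *ᵥ (P *ᵥ x)) ≤
      sSup {v : ℝ | ∃ A : Matrix (Fin d) (Fin d) ℝ,
        A.IsSymm ∧ frobNorm A ≤ 1 ∧ v = msVar T (fun x => x ⬝ᵥ (P * A * P).mulVec x)} := by
  refine le_csSup ⟨msAvg T fun x => (P *ᵥ x ⬝ᵥ P *ᵥ x) ^ 2, ?_⟩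
    ⟨A, hA, hAF, by simp only [dotProduct_mul_mul_mulVec hP]⟩
  rintro v ⟨B, -, hBF, rfl⟩
  rw [frobNorm_eq_norm_toFrobenius] at hBF
  rw [msVar_eq_msAvg_sq_sub_sq]
  refine (sub_le_self _ (sq_nonneg _)).trans (msAvg_mono fun x _ => ?_)
  have hPx : 0 ≤ P *ᵥ x ⬝ᵥ P *ᵥ x := dotProduct_self_star_nonneg _
  rw [dotProduct_mul_mul_mulVec hP, ← sq_abs]
  exact pow_le_pow_left₀ (abs_nonneg _)
    ((abs_dotProduct_mulVec_le _ B).trans (mul_le_of_le_one_right hPx hBF)) 2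

theorem le_two_div_mul_of_mul_le {a b x y α : ℝ} (hα : 0 < α) (hb : 0 < b) (hx : 0 ≤ x)
    (hab : α / 2 * b ≤ a) (h : a * x ≤ b * y) : x ≤ 2 / α * y := by
  have hxy : α / 2 * x ≤ y :=
    le_of_mul_le_mul_left (by linarith [mul_le_mul_of_nonneg_right hab hx]) hb
  calc x = 2 / α * (α / 2 * x) := by field_simp
    _ ≤ 2 / α * y := by gcongr

/-- certificate lemma, first part. For any sub-multiset `T'` of `T` with
`|T'| ≥ (α/2)|T|`, the empirical covariance of `P x` over `T'` is close to the empirical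
second moment matrix of `P x` over `T`, in terms of
`V* = sup_{A symm, ‖A‖_F ≤ 1} Var_{x∼T}[xᵀ P A P x]`. -/
theorem statement8 (d : ℕ) (α : ℝ) (hα : α ∈ Set.Ioc (0 : ℝ) 1)
    (T : Multiset (Fin d → ℝ)) (hT : T ≠ 0)
    (P : Matrix (Fin d) (Fin d) ℝ) (hP : P.IsSymm)
    (T' : Multiset (Fin d → ℝ)) (hsub : T' ≤ T)
    (hcard : (α / 2) * (Multiset.card T : ℝ) ≤ (Multiset.card T' : ℝ)) :
    frobNorm (msCov T' (fun x => P.mulVec x) -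
        msAvg T (fun x => Matrix.vecMulVec (P.mulVec x) (P.mulVec x))) ^ 2 ≤
      (4 / α) * sSup {v : ℝ | ∃ A : Matrix (Fin d) (Fin d) ℝ,
          A.IsSymm ∧ frobNorm A ≤ 1 ∧ v = msVar T (fun x => x ⬝ᵥ (P * A * P).mulVec x)} +
        (8 / α ^ 2) *
          opNorm (msAvg T (fun x => Matrix.vecMulVec (P.mulVec x) (P.mulVec x))) ^ 2 := by
  obtain ⟨hα0, -⟩ := hα
  have hTpos : (0 : ℝ) < Multiset.card T := by exact_mod_cast Multiset.card_pos.mpr hT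
  set V := sSup {v : ℝ | ∃ A : Matrix (Fin d) (Fin d) ℝ,
    A.IsSymm ∧ frobNorm A ≤ 1 ∧ v = msVar T (fun x => x ⬝ᵥ (P * A * P).mulVec x)}
  set M := msAvg T fun x => vecMulVec (P *ᵥ x) (P *ᵥ x)
  set μ := msAvg T' fun x => P *ᵥ x
  obtain ⟨A, hA, hAF, hDA⟩ := exists_isSymm_inner_toFrobenius_eq_norm
    ((isSymm_msCov T' _).sub (isSymm_msAvg_vecMulVec_self T fun x => P *ᵥ x))
  set g := fun x => P *ᵥ x ⬝ᵥ A *ᵥ (P *ᵥ x)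
  have hVA : msVar T g ≤ V :=
    msVar_le_sSup_msVar_quadForm T hP hA ((frobNorm_eq_norm_toFrobenius A).trans_le hAF)
  have hshift : (msAvg T' g - msAvg T g) ^ 2 ≤ 2 / α * V :=
    le_two_div_mul_of_mul_le hα0 hTpos (sq_nonneg _) hcard
      ((card_mul_sq_msAvg_sub_le_msVar hsub g).trans
        (mul_le_mul_of_nonneg_left hVA (Nat.cast_nonneg _)))
  have hμ0 : 0 ≤ μ ⬝ᵥ μ := dotProduct_self_star_nonneg μ
  have hmean : μ ⬝ᵥ μ ≤ 2 / α * opNorm M :=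
    le_two_div_mul_of_mul_le hα0 hTpos hμ0 hcard (card_mul_dotProduct_msAvg_self_le hsub _)
  have hcorr : |μ ⬝ᵥ A *ᵥ μ| ≤ μ ⬝ᵥ μ :=
    (abs_dotProduct_mulVec_le μ A).trans (mul_le_of_le_one_right hμ0 hAF)
  rw [frobNorm_eq_norm_toFrobenius, ← hDA, inner_toFrobenius_msCov_sub_msAvg]
  calc ((msAvg T' g - msAvg T g) - μ ⬝ᵥ A *ᵥ μ) ^ 2
      ≤ 2 * (msAvg T' g - msAvg T g) ^ 2 + 2 * |μ ⬝ᵥ A *ᵥ μ| ^ 2 := by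
        rw [sq_abs]; nlinarith [sq_nonneg (msAvg T' g - msAvg T g + μ ⬝ᵥ A *ᵥ μ)]
    _ ≤ 2 * (2 / α * V) + 2 * (2 / α * opNorm M) ^ 2 := by
        gcongr
        exact hcorr.trans hmean
    _ = _ := by ring

end ListDecCov
end
end

section
/- Let A and B be two d×d positive semidefinite matrices such that the null space of A is contained in the null space of B (equivalently, BB† ⪯ AA† in the positive semidefinite order). Then ‖A B A − BB†‖_F ≤ 2·‖A B A − AA†‖_F. -/
open Matrix MeasureTheory ProbabilityTheory

noncomputable section

/-!
With `P = AA†`, `Q = BB†` and `C = ABA`, the triangle inequality reduces the claim to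
`‖P - Q‖_F ≤ ‖C - P‖_F`. Expanding both squares (`P`, `Q` are orthogonal projections and
`CP = C`) and using `tr Q ≤ tr PQ`, a consequence of `Q ⪯ P`, it suffices that
`2 tr C ≤ ‖C‖_F² + tr Q`. Write `C = XXᵀ` with `X = A B^{1/2}`; then `XQ = X`, and the inequality
is `‖XᵀX - Q‖_F² ≥ 0`, because `XᵀX` and `XXᵀ` have the same trace and Frobenius norm.
-/

namespace ListDecCov

section

variable {n : Type*} [Fintype n]

lemma _root_.IsStarProjection.transpose_eq_self {P : Matrix n n ℝ} (hP : IsStarProjection P) :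
    Pᵀ = P := by
  rw [← conjTranspose_eq_transpose_of_trivial, ← star_eq_conjTranspose]
  exact hP.isSelfAdjoint

lemma isStarProjection_of_mul_self_of_transpose_eq {P : Matrix n n ℝ} (hPP : P * P = P)
    (hPt : Pᵀ = P) : IsStarProjection P :=
  ⟨hPP, by rw [IsSelfAdjoint, star_eq_conjTranspose, conjTranspose_eq_transpose_of_trivial, hPt]⟩

lemma trace_le_trace_mul_of_posSemidef_sub {P Q : Matrix n n ℝ} (hQ : IsStarProjection Q)
    (hPQ : (P - Q).PosSemidef) : Q.trace ≤ (P * Q).trace := by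
  have hQPQ := (hPQ.mul_mul_conjTranspose_same Q).trace_nonneg
  rw [conjTranspose_eq_transpose_of_trivial, hQ.transpose_eq_self, Matrix.mul_sub, Matrix.sub_mul,
    hQ.isIdempotentElem.eq, trace_sub, Matrix.mul_assoc, trace_mul_comm, Matrix.mul_assoc,
    hQ.isIdempotentElem.eq] at hQPQ
  exact sub_nonneg.1 hQPQ

open scoped MatrixOrder in
lemma _root_.Matrix.PosSemidef.exists_transpose_eq_mul_self_eq [DecidableEq n]
    {B : Matrix n n ℝ} (hB : B.PosSemidef) : ∃ S : Matrix n n ℝ, Sᵀ = S ∧ S * S = B :=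
  ⟨CFC.sqrt B, (isHermitian_iff_isSymm.1 (CFC.sqrt_nonneg B).posSemidef.1).eq,
    CFC.sqrt_mul_sqrt_self B hB.nonneg⟩

lemma mul_eq_self_of_mul_self_mul_eq [DecidableEq n] {S Q : Matrix n n ℝ} (hS : Sᵀ = S)
    (h : S * S * Q = S * S) : S * Q = S := by
  have h' : (Sᴴ * S) * (Q - 1) = 0 := by
    rw [conjTranspose_eq_transpose_of_trivial, hS, Matrix.mul_sub, h, Matrix.mul_one, sub_self]
  rwa [conjTranspose_mul_self_mul_eq_zero, Matrix.mul_sub, Matrix.mul_one, sub_eq_zero] at h'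

end

namespace IsMoorePenrose

variable {d : ℕ} {H Hd : Matrix (Fin d) (Fin d) ℝ}

lemma isStarProjection (h : IsMoorePenrose H Hd) : IsStarProjection (H * Hd) :=
  isStarProjection_of_mul_self_of_transpose_eq (by rw [← Matrix.mul_assoc, h.1]) h.2.2.1

lemma mul_mul_self (h : IsMoorePenrose H Hd) (hH : Hᵀ = H) : H * (H * Hd) = H := by
  have h1 := congrArg transpose h.1
  rwa [transpose_mul, hH, h.2.2.1] at h1

end IsMoorePenrose

section

variable {d : ℕ}

lemma frobNorm_sq (M : Matrix (Fin d) (Fin d) ℝ) : frobNorm M ^ 2 = (Mᵀ * M).trace := by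
  rw [frobNorm, Real.sq_sqrt (by positivity), Finset.sum_comm]
  simp only [trace, diag, mul_apply, transpose_apply, sq]

lemma frobNorm_sub_sq (X Y : Matrix (Fin d) (Fin d) ℝ) :
    frobNorm (X - Y) ^ 2 = frobNorm X ^ 2 - 2 * (Xᵀ * Y).trace + frobNorm Y ^ 2 := by
  have hYX : (Yᵀ * X).trace = (Xᵀ * Y).trace := by
    rw [← trace_transpose, transpose_mul, transpose_transpose]
  rw [frobNorm_sq, frobNorm_sq, frobNorm_sq, transpose_sub, Matrix.sub_mul, Matrix.mul_sub,
    Matrix.mul_sub, trace_sub, trace_sub, trace_sub, hYX]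
  ring

lemma frobNorm_sq_of_isStarProjection {P : Matrix (Fin d) (Fin d) ℝ} (hP : IsStarProjection P) :
    frobNorm P ^ 2 = P.trace := by
  rw [frobNorm_sq, hP.transpose_eq_self, hP.isIdempotentElem.eq]

lemma frobNorm_transpose_mul_self (X : Matrix (Fin d) (Fin d) ℝ) :
    frobNorm (Xᵀ * X) = frobNorm (X * Xᵀ) := by
  have hnonneg (M : Matrix (Fin d) (Fin d) ℝ) : 0 ≤ frobNorm M := Real.sqrt_nonneg _
  refine (pow_left_inj₀ (hnonneg _) (hnonneg _) two_ne_zero).1 ?_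
  rw [frobNorm_sq, frobNorm_sq, transpose_mul, transpose_mul, transpose_transpose,
    Matrix.mul_assoc, trace_mul_comm, Matrix.mul_assoc, Matrix.mul_assoc, Matrix.mul_assoc]

lemma frobNorm_sub_le_add (X Y Z : Matrix (Fin d) (Fin d) ℝ) :
    frobNorm (X - Z) ≤ frobNorm (X - Y) + frobNorm (Y - Z) := by
  let := Matrix.frobeniusNormedAddCommGroup (m := Fin d) (n := Fin d) (α := ℝ)
  have hnorm (M : Matrix (Fin d) (Fin d) ℝ) : frobNorm M = ‖M‖ := by
    rw [frobenius_norm_def, frobNorm, Real.sqrt_eq_rpow]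
    simp only [Real.rpow_two, Real.norm_eq_abs, sq_abs]
  simpa only [hnorm] using norm_sub_le_norm_sub_add_norm_sub X Y Z

lemma two_mul_trace_le_frobNorm_sq_add_trace {X Q : Matrix (Fin d) (Fin d) ℝ}
    (hQ : IsStarProjection Q) (hXQ : X * Q = X) :
    2 * (X * Xᵀ).trace ≤ frobNorm (X * Xᵀ) ^ 2 + Q.trace := by
  have hexpand := frobNorm_sub_sq (Xᵀ * X) Q
  rw [frobNorm_transpose_mul_self, frobNorm_sq_of_isStarProjection hQ, transpose_mul,
    transpose_transpose, Matrix.mul_assoc, hXQ, trace_mul_comm] at hexpand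
  nlinarith [sq_nonneg (frobNorm (Xᵀ * X - Q))]

lemma frobNorm_sub_le_frobNorm_sub {C P Q : Matrix (Fin d) (Fin d) ℝ} (hC : Cᵀ = C)
    (hCP : C * P = C) (hP : IsStarProjection P) (hQ : IsStarProjection Q)
    (hPQ : (P - Q).PosSemidef) (hCQ : 2 * C.trace ≤ frobNorm C ^ 2 + Q.trace) :
    frobNorm (P - Q) ≤ frobNorm (C - P) := by
  have hCP2 := frobNorm_sub_sq C P
  have hPQ2 := frobNorm_sub_sq P Q
  rw [hC, hCP, frobNorm_sq_of_isStarProjection hP] at hCP2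
  rw [hP.transpose_eq_self, frobNorm_sq_of_isStarProjection hP,
    frobNorm_sq_of_isStarProjection hQ] at hPQ2
  have htrace := trace_le_trace_mul_of_posSemidef_sub hQ hPQ
  exact le_of_pow_le_pow_left₀ two_ne_zero (Real.sqrt_nonneg _) (by linarith)

end

/-- for PSD matrices `A`, `B` with `ker A ⊆ ker B` (equivalently
`BB† ⪯ AA†`), one has `‖A B A − BB†‖_F ≤ 2‖A B A − AA†‖_F`. The pseudoinverses are
specified via the Penrose equations. -/
theorem statement10 (d : ℕ) (A B Ad Bd : Matrix (Fin d) (Fin d) ℝ)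
    (hA : A.PosSemidef) (hB : B.PosSemidef)
    (hAd : IsMoorePenrose A Ad) (hBd : IsMoorePenrose B Bd)
    (hker : (A * Ad - B * Bd).PosSemidef) :
    frobNorm (A * B * A - B * Bd) ≤ 2 * frobNorm (A * B * A - A * Ad) := by
  have hAt : Aᵀ = A := (isHermitian_iff_isSymm.1 hA.1).eq
  have hBt : Bᵀ = B := (isHermitian_iff_isSymm.1 hB.1).eq
  obtain ⟨S, hSt, hSB⟩ := hB.exists_transpose_eq_mul_self_eq
  have hSQ : S * (B * Bd) = S :=
    mul_eq_self_of_mul_self_mul_eq hSt (by rw [hSB, hBd.mul_mul_self hBt])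
  have hABA : (A * S) * (A * S)ᵀ = A * B * A := by
    rw [transpose_mul, hAt, hSt, ← hSB]
    simp only [Matrix.mul_assoc]
  have hCt : (A * B * A)ᵀ = A * B * A := by rw [← hABA, transpose_mul, transpose_transpose]
  have hCP : A * B * A * (A * Ad) = A * B * A := by rw [Matrix.mul_assoc, hAd.mul_mul_self hAt]
  have hCQ := two_mul_trace_le_frobNorm_sq_add_trace (X := A * S) hBd.isStarProjection
    (by rw [Matrix.mul_assoc, hSQ])
  rw [hABA] at hCQ
  have hPQ := frobNorm_sub_le_frobNorm_sub hCt hCP hAd.isStarProjection hBd.isStarProjection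
    hker hCQ
  calc frobNorm (A * B * A - B * Bd)
      ≤ frobNorm (A * B * A - A * Ad) + frobNorm (A * Ad - B * Bd) := frobNorm_sub_le_add _ _ _
    _ ≤ 2 * frobNorm (A * B * A - A * Ad) := by linarith

end ListDecCov
end
end
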